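/- arXiv:2005.13620 — 2 statements merged into one kernel-verified Lean document; each statement's English description precedes it below -/
import Mathlib

section
/- For |q| < 1, the double sum ∑_{n₁,n₂≥0} q^{n₁+n₂+n₁n₂} / ((q;q)_{n₁} (q;q)_{n₂}) equals 1/((1-q)·(q;q)_∞). -/
/-- The finite q-Pochhammer symbol `(q;q)_n = ∏_{i=1}^n (1 - q^i)`. -/
noncomputable def qPoch (q : ℂ) (n : ℕ) : ℂ := ∏ i ∈ Finset.range n, (1 - q ^ (i + 1))

/-- The infinite q-Pochhammer symbol `(q;q)_∞ = ∏_{i≥1} (1 - q^i)`. -/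
noncomputable def qPochInf (q : ℂ) : ℂ := ∏' i : ℕ, (1 - q ^ (i + 1))

/-!
Write `e(z) = ∑ zⁿ / (q;q)ₙ` for Euler's q-exponential. Comparing coefficients gives the
functional equation `e(qz) = (1 - z) e(z)`, hence `e(qᴺ z) = (z;q)_N e(z)`; letting `N → ∞`
(Tannery's theorem) yields Euler's identity `(z;q)_∞ e(z) = 1`.

Since `q^(a + b + ab) = qᵃ (q^(a+1))ᵇ`, the inner sum over `b` of the double series is
`qᵃ / (q;q)ₐ · e(q^(a+1)) = qᵃ / (q;q)ₐ · (q;q)ₐ e(q) = qᵃ / (q;q)_∞`, and summing the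
geometric series over `a` gives `1 / ((1 - q) (q;q)_∞)`.
-/

open Filter Topology Finset

noncomputable def qExp (q z : ℂ) : ℂ := ∑' n : ℕ, z ^ n / qPoch q n

variable {q : ℂ}

lemma qPoch_zero (q : ℂ) : qPoch q 0 = 1 := prod_range_zero _

lemma qPoch_succ (q : ℂ) (n : ℕ) : qPoch q (n + 1) = qPoch q n * (1 - q ^ (n + 1)) :=
  prod_range_succ _ _

lemma one_sub_pow_succ_ne_zero (hq : ‖q‖ < 1) (i : ℕ) : 1 - q ^ (i + 1) ≠ 0 := by
  have hlt : ‖q ^ (i + 1)‖ < 1 := by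
    rw [norm_pow]
    exact pow_lt_one₀ (norm_nonneg q) hq i.succ_ne_zero
  refine sub_ne_zero.2 fun h => ?_
  rw [← h, norm_one] at hlt
  exact lt_irrefl _ hlt

lemma qPoch_ne_zero (hq : ‖q‖ < 1) (n : ℕ) : qPoch q n ≠ 0 :=
  prod_ne_zero_iff.2 fun i _ => one_sub_pow_succ_ne_zero hq i

lemma norm_pow_mul_le (hq : ‖q‖ < 1) (N : ℕ) (z : ℂ) : ‖q ^ N * z‖ ≤ ‖z‖ := by
  rw [norm_mul, norm_pow]
  exact mul_le_of_le_one_left (norm_nonneg z) (pow_le_one₀ (norm_nonneg q) hq.le)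

lemma summable_norm_qExp (hq : ‖q‖ < 1) {z : ℂ} (hz : ‖z‖ < 1) :
    Summable fun n : ℕ => ‖z ^ n / qPoch q n‖ := by
  obtain ⟨r, hzr, hr⟩ := exists_between hz
  have hlim : Tendsto (fun n : ℕ => ‖z‖ / ‖1 - q ^ (n + 1)‖) atTop (𝓝 ‖z‖) := by
    have hpow : Tendsto (fun n : ℕ => q ^ (n + 1)) atTop (𝓝 0) :=
      (tendsto_pow_atTop_nhds_zero_of_norm_lt_one hq).comp (tendsto_add_atTop_nat 1)
    simpa [Pi.div_def] using (tendsto_const_nhds (x := ‖z‖)).div (hpow.const_sub 1).norm (by simp)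
  refine summable_of_ratio_norm_eventually_le hr ?_
  filter_upwards [hlim.eventually (ge_mem_nhds hzr)] with n hn
  have hratio : ‖z ^ (n + 1) / qPoch q (n + 1)‖
      = ‖z‖ / ‖1 - q ^ (n + 1)‖ * ‖z ^ n / qPoch q n‖ := by
    simp only [pow_succ z, qPoch_succ, norm_div, norm_mul]
    ring
  rw [norm_norm, norm_norm, hratio]
  exact mul_le_mul_of_nonneg_right hn (norm_nonneg _)

lemma summable_qExp (hq : ‖q‖ < 1) {z : ℂ} (hz : ‖z‖ < 1) :
    Summable fun n : ℕ => z ^ n / qPoch q n :=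
  (summable_norm_qExp hq hz).of_norm

lemma qExp_zero (q : ℂ) : qExp q 0 = 1 := by
  rw [qExp, tsum_eq_single 0 fun n hn => by simp [zero_pow hn]]
  simp [qPoch_zero]

lemma qExp_mul_left (hq : ‖q‖ < 1) {z : ℂ} (hz : ‖z‖ < 1) :
    qExp q (q * z) = (1 - z) * qExp q z := by
  have hsum := summable_qExp hq hz
  have hqz : ‖q ^ 1 * z‖ < 1 := (norm_pow_mul_le hq 1 z).trans_lt hz
  rw [pow_one] at hqz
  have hsum_q := summable_qExp hq hqz
  have hdiff : qExp q z - qExp q (q * z) = z * qExp q z := by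
    rw [qExp, qExp, ← hsum.tsum_sub hsum_q, (hsum.sub hsum_q).tsum_eq_zero_add, ← tsum_mul_left]
    simp only [pow_zero, sub_self, zero_add]
    refine tsum_congr fun n => ?_
    have hP := qPoch_ne_zero hq n
    have hfactor := one_sub_pow_succ_ne_zero hq n
    rw [qPoch_succ, mul_pow]
    field_simp
    ring
  linear_combination -hdiff

lemma qExp_pow_mul (hq : ‖q‖ < 1) {z : ℂ} (hz : ‖z‖ < 1) (N : ℕ) :
    qExp q (q ^ N * z) = (∏ k ∈ range N, (1 - q ^ k * z)) * qExp q z := by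
  induction N with
  | zero => simp
  | succ N ih =>
    rw [pow_succ', mul_assoc, qExp_mul_left hq ((norm_pow_mul_le hq N z).trans_lt hz), ih,
      prod_range_succ]
    ring

lemma tendsto_qExp_pow_mul (hq : ‖q‖ < 1) {z : ℂ} (hz : ‖z‖ < 1) :
    Tendsto (fun N : ℕ => qExp q (q ^ N * z)) atTop (𝓝 1) := by
  rw [← qExp_zero q]
  refine tendsto_tsum_of_dominated_convergence (summable_norm_qExp hq hz) (fun k => ?_) ?_
  · have hpow : Tendsto (fun N : ℕ => q ^ N * z) atTop (𝓝 0) := by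
      simpa using (tendsto_pow_atTop_nhds_zero_of_norm_lt_one hq).mul_const z
    exact (hpow.pow k).div_const _
  · refine Eventually.of_forall fun N k => ?_
    rw [norm_div, norm_div, norm_pow, norm_pow]
    gcongr
    exact norm_pow_mul_le hq N z

lemma multipliable_one_sub_pow_mul (hq : ‖q‖ < 1) (z : ℂ) :
    Multipliable fun k : ℕ => 1 - q ^ k * z := by
  have hnorm : Summable fun k : ℕ => ‖-(q ^ k * z)‖ := by
    simpa [norm_mul, norm_pow] using
      (summable_geometric_of_lt_one (norm_nonneg q) hq).mul_right ‖z‖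
  simpa [sub_eq_add_neg] using multipliable_one_add_of_summable hnorm

theorem tprod_one_sub_pow_mul_mul_qExp (hq : ‖q‖ < 1) {z : ℂ} (hz : ‖z‖ < 1) :
    (∏' k : ℕ, (1 - q ^ k * z)) * qExp q z = 1 := by
  have hprod := ((multipliable_one_sub_pow_mul hq z).tendsto_prod_tprod_nat).mul_const (qExp q z)
  refine tendsto_nhds_unique hprod ?_
  simpa only [qExp_pow_mul hq hz] using tendsto_qExp_pow_mul hq hz

lemma qExp_self (hq : ‖q‖ < 1) : qExp q q = (qPochInf q)⁻¹ := by
  refine eq_inv_of_mul_eq_one_right ?_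
  simpa only [← pow_succ, qPochInf] using tprod_one_sub_pow_mul_mul_qExp hq hq

lemma qExp_pow_succ (hq : ‖q‖ < 1) (n : ℕ) : qExp q (q ^ (n + 1)) = qPoch q n * qExp q q := by
  simpa only [← pow_succ, qPoch] using qExp_pow_mul hq hq n

lemma pow_div_qPoch_mul_qPoch (a b : ℕ) :
    q ^ (a + b + a * b) / (qPoch q a * qPoch q b)
      = q ^ a / qPoch q a * ((q ^ (a + 1)) ^ b / qPoch q b) := by
  rw [← pow_mul, div_mul_div_comm, ← pow_add]
  ring_nf

lemma summable_pow_div_qPoch_mul_qPoch (hq : ‖q‖ < 1) :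
    Summable fun n : ℕ × ℕ => q ^ (n.1 + n.2 + n.1 * n.2) / (qPoch q n.1 * qPoch q n.2) := by
  have hsum := summable_norm_qExp hq hq
  refine Summable.of_norm_bounded
    (hsum.mul_of_nonneg hsum (fun _ => norm_nonneg _) (fun _ => norm_nonneg _)) ?_
  rintro ⟨a, b⟩
  rw [pow_div_qPoch_mul_qPoch, norm_mul]
  gcongr
  simp only [norm_div, norm_pow]
  gcongr
  exact pow_le_of_le_one (norm_nonneg q) hq.le a.succ_ne_zero

lemma tsum_pow_div_qPoch_mul_qPoch (hq : ‖q‖ < 1) (a : ℕ) :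
    ∑' b : ℕ, q ^ (a + b + a * b) / (qPoch q a * qPoch q b) = q ^ a * qExp q q := by
  simp only [pow_div_qPoch_mul_qPoch, tsum_mul_left]
  rw [← qExp, qExp_pow_succ hq]
  field_simp [qPoch_ne_zero hq a]

theorem stmt0 (q : ℂ) (hq : ‖q‖ < 1) :
    ∑' n : ℕ × ℕ, q ^ (n.1 + n.2 + n.1 * n.2) / (qPoch q n.1 * qPoch q n.2)
      = 1 / ((1 - q) * qPochInf q) := by
  have hsum := summable_pow_div_qPoch_mul_qPoch hq
  rw [hsum.tsum_prod' hsum.prod_factor, tsum_congr (tsum_pow_div_qPoch_mul_qPoch hq),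
    tsum_mul_right, tsum_geometric_of_norm_lt_one hq, qExp_self hq, one_div, mul_inv]
end

section
/- For nonnegative integers n and |q|<1, one has ∑_{m≥0} q^{m(n+1)} (q;q)_{n+m}/(q;q)_m = (q;q)_n / (q^{n+1};q)_{n+1}. -/
set_option maxHeartbeats 1000000

/-- The infinite q-Pochhammer symbol `(a;q)_∞ = ∏_{i≥0} (1 - a q^i)`. -/
noncomputable def pochInf (a q : ℂ) : ℂ := ∏' i : ℕ, (1 - a * q ^ i)

noncomputable def Tq (q : ℂ) (n m : ℕ) : ℂ := ∏ i ∈ Finset.range n, (1 - q ^ (m + i + 1))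

lemma normTq {q : ℂ} (hq : ‖q‖ < 1) (n m : ℕ) : ‖Tq q n m‖ ≤ 2 ^ n := by
  calc ‖Tq q n m‖ ≤ ∏ i ∈ Finset.range n, ‖(1 : ℂ) - q ^ (m + i + 1)‖ := Finset.norm_prod_le _ _
    _ ≤ ∏ _i ∈ Finset.range n, (2 : ℝ) := by
        apply Finset.prod_le_prod
        · intro i _; positivity
        · intro i _
          calc ‖(1 : ℂ) - q ^ (m + i + 1)‖ ≤ ‖(1:ℂ)‖ + ‖q ^ (m + i + 1)‖ := norm_sub_le _ _
            _ ≤ 1 + 1 := by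
                gcongr
                · simp
                · rw [norm_pow]
                  exact pow_le_one₀ (norm_nonneg q) hq.le
            _ = 2 := by norm_num
    _ = 2 ^ n := by simp

lemma summable_aux {z : ℂ} (hz : ‖z‖ < 1) (f : ℕ → ℂ) (C : ℝ)
    (hf : ∀ m, ‖f m‖ ≤ C) : Summable (fun m => z ^ m * f m) := by
  apply Summable.of_norm
  have hb : ∀ m : ℕ, ‖z ^ m * f m‖ ≤ C * ‖z‖ ^ m := by
    intro m
    rw [norm_mul, norm_pow, mul_comm]
    have h0 : (0:ℝ) ≤ ‖z‖ ^ m := by positivity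
    exact mul_le_mul (hf m) le_rfl h0 ((norm_nonneg (f 0)).trans (hf 0))
  exact Summable.of_nonneg_of_le (fun m => norm_nonneg _) hb
    ((summable_geometric_of_lt_one (norm_nonneg z) hz).mul_left C)

lemma one_sub_ne {w : ℂ} (hw : ‖w‖ < 1) : (1 : ℂ) - w ≠ 0 := by
  intro h
  have : w = 1 := by linear_combination -h
  rw [this] at hw; simp at hw

lemma key (q z : ℂ) (hq : ‖q‖ < 1) (hz : ‖z‖ < 1) (n : ℕ) :
    ∑' m : ℕ, z ^ m * Tq q n m
      = qPoch q n / ∏ i ∈ Finset.range (n + 1), (1 - z * q ^ i) := by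
  have hzq : ∀ i : ℕ, ‖z * q ^ i‖ < 1 := by
    intro i
    rw [norm_mul, norm_pow]
    calc ‖z‖ * ‖q‖ ^ i ≤ ‖z‖ * 1 := by
          gcongr; exact pow_le_one₀ (norm_nonneg q) hq.le
      _ < 1 := by simpa using hz
  have hD : ∀ N : ℕ, (∏ i ∈ Finset.range N, (1 - z * q ^ i)) ≠ 0 := by
    intro N
    exact Finset.prod_ne_zero_iff.2 fun i _ => one_sub_ne (hzq i)
  induction n with
  | zero =>
    simp only [Tq, Finset.range_zero, Finset.prod_empty, mul_one, Finset.range_one,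
      pow_zero, qPoch]
    rw [tsum_geometric_of_norm_lt_one hz]
    simp
  | succ n ih =>
    have hqn1 : ‖q ^ (n+1)‖ < 1 := by
      rw [norm_pow]
      calc ‖q‖ ^ (n+1) ≤ ‖q‖ := pow_le_of_le_one (norm_nonneg q) hq.le (Nat.succ_ne_zero n)
        _ < 1 := hq
    have hS1 : Summable (fun m => z ^ m * Tq q (n+1) m) :=
      summable_aux hz _ _ (fun m => normTq hq (n+1) m)
    have hSn : Summable (fun m => z ^ m * Tq q n m) :=
      summable_aux hz _ _ (fun m => normTq hq n m)
    have hSg : Summable (fun m => z ^ m * (Tq q n m * (1 - q ^ m))) := by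
      apply summable_aux hz _ (2 ^ n * 2)
      intro m
      rw [norm_mul]
      have h1 : ‖(1:ℂ) - q ^ m‖ ≤ 2 := by
        calc ‖(1:ℂ) - q ^ m‖ ≤ ‖(1:ℂ)‖ + ‖q ^ m‖ := norm_sub_le _ _
          _ ≤ 1 + 1 := by
              gcongr
              · simp
              · rw [norm_pow]; exact pow_le_one₀ (norm_nonneg q) hq.le
          _ = 2 := by norm_num
      exact mul_le_mul (normTq hq n m) h1 (norm_nonneg _) (by positivity)
    -- pointwise split
    have hsplit : ∀ m : ℕ, z ^ m * Tq q (n+1) m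
        = (1 - q ^ (n+1)) * (z ^ m * Tq q n m)
          + q ^ (n+1) * (z ^ m * (Tq q n m * (1 - q ^ m))) := by
      intro m
      have : Tq q (n+1) m = Tq q n m * (1 - q ^ (m + n + 1)) := by
        rw [Tq, Finset.prod_range_succ]; rfl
      rw [this]
      have hpow : q ^ (m + n + 1) = q ^ (n+1) * q ^ m := by
        rw [← pow_add]; ring_nf
      rw [hpow]; ring
    -- the shifted sum
    have hshift : ∑' m : ℕ, z ^ m * (Tq q n m * (1 - q ^ m))
        = z * ∑' m : ℕ, z ^ m * Tq q (n+1) m := by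
      rw [Summable.tsum_eq_zero_add hSg]
      have h0 : z ^ 0 * (Tq q n 0 * (1 - q ^ 0)) = 0 := by simp
      rw [h0, zero_add]
      rw [← tsum_mul_left]
      congr 1
      funext k
      have hT : Tq q n (k+1) * (1 - q ^ (k+1)) = Tq q (n+1) k := by
        rw [Tq, Tq, Finset.prod_range_succ']
        have : ∀ i, k + 1 + i + 1 = k + (i+1) + 1 := by intro i; ring
        simp only [this]
      rw [hT]; ring
    have heq : (∑' m : ℕ, z ^ m * Tq q (n+1) m)
        = (1 - q ^ (n+1)) * (∑' m : ℕ, z ^ m * Tq q n m)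
          + q ^ (n+1) * (z * ∑' m : ℕ, z ^ m * Tq q (n+1) m) := by
      calc (∑' m : ℕ, z ^ m * Tq q (n+1) m)
          = ∑' m : ℕ, ((1 - q ^ (n+1)) * (z ^ m * Tq q n m)
            + q ^ (n+1) * (z ^ m * (Tq q n m * (1 - q ^ m)))) := tsum_congr hsplit
        _ = (1 - q ^ (n+1)) * (∑' m : ℕ, z ^ m * Tq q n m)
            + q ^ (n+1) * ∑' m : ℕ, z ^ m * (Tq q n m * (1 - q ^ m)) := by
            rw [Summable.tsum_add (hSn.mul_left _) (hSg.mul_left _), tsum_mul_left, tsum_mul_left]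
        _ = _ := by rw [hshift]
    have hDn : (∏ i ∈ Finset.range (n+1), (1 - z * q ^ i)) ≠ 0 := hD (n+1)
    have hlast : (1 : ℂ) - z * q ^ (n+1) ≠ 0 := one_sub_ne (hzq (n+1))
    rw [Finset.prod_range_succ]
    rw [show qPoch q (n+1) = qPoch q n * (1 - q ^ (n+1)) from Finset.prod_range_succ _ _]
    rw [eq_div_iff (mul_ne_zero hDn hlast)]
    rw [ih] at heq
    field_simp at heq
    linear_combination heq

theorem stmt15 (q : ℂ) (hq : ‖q‖ < 1) (n : ℕ) :
    ∑' m : ℕ, q ^ (m * (n + 1)) * qPoch q (n + m) / qPoch q m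
      = qPoch q n / ∏ i ∈ Finset.range (n + 1), (1 - q ^ (n + 1) * q ^ i) := by
  have hqm : ∀ m : ℕ, qPoch q m ≠ 0 := by
    intro m
    refine Finset.prod_ne_zero_iff.2 fun i _ => one_sub_ne ?_
    rw [norm_pow]
    calc ‖q‖ ^ (i+1) ≤ ‖q‖ := pow_le_of_le_one (norm_nonneg q) hq.le (Nat.succ_ne_zero i)
      _ < 1 := hq
  have hz : ‖q ^ (n+1)‖ < 1 := by
    rw [norm_pow]
    calc ‖q‖ ^ (n+1) ≤ ‖q‖ := pow_le_of_le_one (norm_nonneg q) hq.le (Nat.succ_ne_zero n)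
      _ < 1 := hq
  have hterm : ∀ m : ℕ, q ^ (m * (n + 1)) * qPoch q (n + m) / qPoch q m
      = (q ^ (n+1)) ^ m * Tq q n m := by
    intro m
    have hsplit2 : qPoch q (n + m) = qPoch q m * Tq q n m := by
      rw [qPoch, Nat.add_comm n m, Finset.prod_range_add]
      rfl
    rw [hsplit2, ← pow_mul, Nat.mul_comm m (n+1)]
    field_simp [hqm m]
  rw [tsum_congr hterm, key q (q ^ (n+1)) hq hz n]
end
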